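/- arXiv:2509.26098 — 2 statements merged into one kernel-verified Lean document; each statement's English description precedes it below -/
import Mathlib

section
/- Let 1 < α < 2, 0 < β < d, and let p, q satisfy 1 ≤ p < α/β, q = (d+α)/β, and p ≤ q. If f ∈ Ḃ^{−β,∞}_∞(ℝ^d), i.e. sup_{t>0} t^{β/α} ‖p_t ∗ f‖_{L^∞} < ∞ where p_t is the fractional heat kernel with Fourier symbol e^{−t|ξ|^α}, then the function (t,x) ↦ p_t ∗ f(x) belongs to the parabolic Morrey space M^{p,q}_α([0,∞)×ℝ^d) and ‖p_t ∗ f‖_{M^{p,q}_α} ≤ C ‖f‖_{Ḃ^{−β,∞}_∞}. -/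
open MeasureTheory
open scoped RealInnerProductSpace ENNReal

/-- The fractional heat kernel `p_t` with Fourier symbol `e^{-t|ξ|^α}`. -/
noncomputable def fracHeatKernel (d : ℕ) (α t : ℝ) (x : EuclideanSpace ℝ (Fin d)) : ℝ :=
  (2 * Real.pi) ^ (-(d : ℝ)) *
    ∫ ξ : EuclideanSpace ℝ (Fin d), Real.cos (⟪x, ξ⟫) * Real.exp (-t * ‖ξ‖ ^ α)

/-- The convolution `p_t ∗ f`. -/
noncomputable def heatConv (d : ℕ) (α t : ℝ) (f : EuclideanSpace ℝ (Fin d) → ℝ)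
    (x : EuclideanSpace ℝ (Fin d)) : ℝ :=
  ∫ y, fracHeatKernel d α t (x - y) * f y

/-- The thermic Besov norm `‖f‖_{Ḃ^{-β,∞}_∞} = sup_{t>0} t^{β/α} ‖p_t ∗ f‖_{L^∞}`. -/
noncomputable def besovNorm (d : ℕ) (α β : ℝ) (f : EuclideanSpace ℝ (Fin d) → ℝ) : ℝ≥0∞ :=
  ⨆ (t : ℝ) (_ : 0 < t),
    ENNReal.ofReal (t ^ (β / α)) * eLpNorm (heatConv d α t f) ⊤ volume

/-- The parabolic Morrey norm of `ψ` on `[0,∞) × ℝᵈ`. -/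
noncomputable def pmNormHalf (d : ℕ) (α p q : ℝ)
    (ψ : ℝ × EuclideanSpace ℝ (Fin d) → ℝ) : ℝ≥0∞ :=
  ⨆ (r : ℝ) (_ : 0 < r) (t : ℝ) (_ : 0 ≤ t) (x : EuclideanSpace ℝ (Fin d)),
    ENNReal.ofReal (r ^ (-((d : ℝ) + α) * (1 / p - 1 / q))) *
      (∫⁻ sy in {sy : ℝ × EuclideanSpace ℝ (Fin d) |
          0 ≤ sy.1 ∧ |t - sy.1| ^ (1 / α) + dist x sy.2 < r},
        ENNReal.ofReal (|ψ sy| ^ p)) ^ (1 / p)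

/-!
The Besov bound controls every time slice: `‖p_s ∗ f‖_∞ ≤ s^{-β/α} ‖f‖`. On a parabolic cylinder
of radius `r` the `p`-th power therefore integrates to at most
`‖f‖^p · |B_r| · ∫_{|s - t| < r^α} s^{-βp/α} ds ≲ ‖f‖^p r^{d + α - βp}`, the time integral
converging because `βp < α`. With `q = (d + α)/β` this power of `r` is exactly cancelled by the
Morrey weight `r^{-(d+α)(1/p - 1/q)}` raised to the power `p`.
-/

section

open Set Metric Module

lemma lintegral_Ioc_rpow_neg_le {a b γ : ℝ} (ha : 0 ≤ a) (hab : a ≤ b) (hγ₀ : 0 ≤ γ)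
    (hγ₁ : γ < 1) :
    ∫⁻ s in Ioc a b, ENNReal.ofReal (s ^ (-γ)) ≤
      ENNReal.ofReal ((b - a) ^ (1 - γ) / (1 - γ)) := by
  have hγ : -1 < -γ := by linarith
  have hint : IntegrableOn (fun s : ℝ ↦ s ^ (-γ)) (Ioc a b) :=
    (intervalIntegral.intervalIntegrable_rpow' hγ).1
  have hnonneg : 0 ≤ᵐ[volume.restrict (Ioc a b)] fun s : ℝ ↦ s ^ (-γ) :=
    ae_restrict_of_forall_mem measurableSet_Ioc fun s hs ↦ Real.rpow_nonneg (ha.trans hs.1.le) _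
  rw [← ofReal_integral_eq_lintegral_ofReal hint hnonneg, ← intervalIntegral.integral_of_le hab,
    integral_rpow (Or.inl hγ), neg_add_eq_sub]
  refine ENNReal.ofReal_le_ofReal (div_le_div_of_nonneg_right ?_ (by linarith))
  -- subadditivity of `x ↦ x ^ (1 - γ)` moves the interval to `[0, b - a]`
  have := Real.rpow_add_le_add_rpow ha (sub_nonneg.2 hab) (sub_nonneg.2 hγ₁.le) (by linarith)
  rw [add_sub_cancel] at this
  linarith

-- Definitionally the domain of integration in `pmNormHalf`.
def parabolicCylinder {E : Type*} [PseudoMetricSpace E] (α t r : ℝ) (x : E) : Set (ℝ × E) :=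
  {sy | 0 ≤ sy.1 ∧ |t - sy.1| ^ (1 / α) + dist x sy.2 < r}

lemma parabolicCylinder_subset {E : Type*} [PseudoMetricSpace E] {α : ℝ} (hα : 0 < α)
    (t r : ℝ) (x : E) :
    parabolicCylinder α t r x ⊆ Icc (max (t - r ^ α) 0) (t + r ^ α) ×ˢ ball x r := by
  rintro ⟨s, y⟩ ⟨hs, hlt⟩
  have hdist : 0 ≤ dist x y := dist_nonneg
  have htime : |t - s| ^ (1 / α) < r := by linarith
  have htime' : |t - s| < r ^ α := by
    simpa [← Real.rpow_mul (abs_nonneg _), hα.ne'] using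
      Real.rpow_lt_rpow (Real.rpow_nonneg (abs_nonneg _) _) htime hα
  have hball : dist x y < r := by linarith [Real.rpow_nonneg (abs_nonneg (t - s)) (1 / α)]
  obtain ⟨h₁, h₂⟩ := abs_lt.1 htime'
  exact ⟨⟨max_le (by linarith) hs, by linarith⟩, mem_ball'.2 hball⟩

lemma lintegral_parabolicCylinder_le {E : Type*} [PseudoMetricSpace E] [MeasurableSpace E]
    (μ : Measure E) [SFinite μ] {α γ r : ℝ} (hα : 0 < α) (hγ₀ : 0 ≤ γ) (hγ₁ : γ < 1)
    (hr : 0 < r) {t : ℝ} (ht : 0 ≤ t) (x : E) {g : ℝ × E → ℝ≥0∞} {M : ℝ≥0∞}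
    (hg : ∀ s > 0, ∀ᵐ y ∂μ, g (s, y) ≤ ENNReal.ofReal (s ^ (-γ)) * M) :
    ∫⁻ z in parabolicCylinder α t r x, g z ∂(volume.prod μ) ≤
      ENNReal.ofReal (2 ^ (1 - γ) / (1 - γ) * r ^ (α * (1 - γ))) * μ (ball x r) * M := by
  set lo := max (t - r ^ α) 0
  set hi := t + r ^ α
  have hrα : 0 < r ^ α := Real.rpow_pos_of_pos hr α
  have hlo : 0 ≤ lo := le_max_right _ _
  have hlohi : lo ≤ hi := max_le (by linarith) (by linarith)
  have hlength : hi - lo ≤ 2 * r ^ α := by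
    have := le_max_left (t - r ^ α) 0
    linarith
  have hslice : ∀ s ∈ Ioc lo hi,
      ∫⁻ y in ball x r, g (s, y) ∂μ ≤ ENNReal.ofReal (s ^ (-γ)) * (M * μ (ball x r)) := by
    intro s hs
    calc ∫⁻ y in ball x r, g (s, y) ∂μ
        ≤ ∫⁻ _ in ball x r, ENNReal.ofReal (s ^ (-γ)) * M ∂μ :=
          lintegral_mono_ae (ae_restrict_of_ae (hg s (hlo.trans_lt hs.1)))
      _ = ENNReal.ofReal (s ^ (-γ)) * (M * μ (ball x r)) := by
          rw [setLIntegral_const, mul_assoc]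
  have htime : (hi - lo) ^ (1 - γ) / (1 - γ) ≤ 2 ^ (1 - γ) / (1 - γ) * r ^ (α * (1 - γ)) := by
    rw [div_mul_eq_mul_div, Real.rpow_mul hr.le, ← Real.mul_rpow zero_le_two hrα.le]
    gcongr
  calc ∫⁻ z in parabolicCylinder α t r x, g z ∂(volume.prod μ)
      ≤ ∫⁻ z in Icc lo hi ×ˢ ball x r, g z ∂(volume.prod μ) :=
        lintegral_mono_set (parabolicCylinder_subset hα t r x)
    _ ≤ ∫⁻ s in Ioc lo hi, ∫⁻ y in ball x r, g (s, y) ∂μ := by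
        rw [← Measure.prod_restrict, Measure.restrict_congr_set Ioc_ae_eq_Icc.symm]
        exact lintegral_prod_le _
    _ ≤ ∫⁻ s in Ioc lo hi, ENNReal.ofReal (s ^ (-γ)) * (M * μ (ball x r)) :=
        setLIntegral_mono' measurableSet_Ioc hslice
    _ = (∫⁻ s in Ioc lo hi, ENNReal.ofReal (s ^ (-γ))) * (M * μ (ball x r)) :=
        lintegral_mul_const _ (by fun_prop)
    _ ≤ ENNReal.ofReal ((hi - lo) ^ (1 - γ) / (1 - γ)) * (M * μ (ball x r)) := by
        gcongr
        exact lintegral_Ioc_rpow_neg_le hlo hlohi hγ₀ hγ₁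
    _ ≤ _ := by
        rw [mul_comm M, ← mul_assoc]
        gcongr

lemma eLpNorm_heatConv_le_besovNorm (d : ℕ) (α β : ℝ) (f : EuclideanSpace ℝ (Fin d) → ℝ) {s : ℝ}
    (hs : 0 < s) :
    eLpNorm (heatConv d α s f) ⊤ volume ≤ ENNReal.ofReal (s ^ (-(β / α))) * besovNorm d α β f := by
  have hterm : ENNReal.ofReal (s ^ (β / α)) * eLpNorm (heatConv d α s f) ⊤ volume ≤
      besovNorm d α β f :=
    le_iSup₂ (f := fun t (_ : 0 < t) ↦
      ENNReal.ofReal (t ^ (β / α)) * eLpNorm (heatConv d α t f) ⊤ volume) s hs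
  have hpos : 0 < s ^ (β / α) := Real.rpow_pos_of_pos hs _
  rw [Real.rpow_neg hs.le, ENNReal.ofReal_inv_of_pos hpos, ← ENNReal.div_eq_inv_mul,
    ENNReal.le_div_iff_mul_le (.inl (by simpa using hpos)) (.inl ENNReal.ofReal_ne_top), mul_comm]
  exact hterm

lemma ae_ofReal_abs_heatConv_rpow_le (d : ℕ) (α β : ℝ) {p : ℝ} (hp : 0 ≤ p)
    (f : EuclideanSpace ℝ (Fin d) → ℝ) {s : ℝ} (hs : 0 < s) :
    ∀ᵐ y, ENNReal.ofReal (|heatConv d α s f y| ^ p) ≤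
      ENNReal.ofReal (s ^ (-(β * p / α))) * besovNorm d α β f ^ p := by
  have hsup := eLpNorm_heatConv_le_besovNorm d α β f hs
  rw [eLpNorm_exponent_top] at hsup
  filter_upwards [ae_le_eLpNormEssSup (f := heatConv d α s f) (μ := volume)] with y hy
  rw [← ENNReal.ofReal_rpow_of_nonneg (abs_nonneg _) hp, ← Real.enorm_eq_ofReal_abs,
    show -(β * p / α) = -(β / α) * p by ring, Real.rpow_mul hs.le,
    ← ENNReal.ofReal_rpow_of_nonneg (Real.rpow_nonneg hs.le _) hp,
    ← ENNReal.mul_rpow_of_nonneg _ _ hp]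
  exact ENNReal.rpow_le_rpow (hy.trans hsup) hp

lemma ofReal_rpow_mul_rpow_one_div_eq {r a b c p : ℝ} (hr : 0 < r) (hc : 0 ≤ c) (hp : 0 < p)
    (hab : a * p + b = 0) {B : ℝ≥0∞} :
    ENNReal.ofReal (r ^ a) * (ENNReal.ofReal (c * r ^ b) * B ^ p) ^ (1 / p) =
      ENNReal.ofReal (c ^ (1 / p)) * B := by
  have hb : b = -(a * p) := by linarith
  rw [ENNReal.mul_rpow_of_nonneg _ _ (by positivity), ← ENNReal.rpow_mul, mul_one_div_cancel hp.ne',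
    ENNReal.rpow_one, ENNReal.ofReal_rpow_of_nonneg (by positivity) (by positivity), ← mul_assoc,
    ← ENNReal.ofReal_mul (by positivity), Real.mul_rpow hc (by positivity), ← Real.rpow_mul hr.le,
    hb, mul_left_comm, ← Real.rpow_add hr]
  field_simp
  simp

lemma ofReal_mul_rpow_mul_addHaar_ball {E : Type*} [NormedAddCommGroup E] [NormedSpace ℝ E]
    [MeasurableSpace E] [BorelSpace E] [FiniteDimensional ℝ E] (μ : Measure E)
    [μ.IsAddHaarMeasure] (x : E) {r a c : ℝ} (hr : 0 < r) (hc : 0 ≤ c) :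
    ENNReal.ofReal (c * r ^ a) * μ (ball x r) =
      ENNReal.ofReal (c * μ.real (ball 0 1) * r ^ (finrank ℝ E + a)) := by
  rw [Measure.addHaar_ball_of_pos μ x hr, ← ofReal_measureReal measure_ball_lt_top.ne,
    ← ENNReal.ofReal_mul (by positivity), ← ENNReal.ofReal_mul (by positivity),
    Real.rpow_add hr, Real.rpow_natCast]
  ring_nf

end

theorem besov_subset_parabolicMorrey_general (d : ℕ) (α β p q : ℝ) (hβ : 0 < β)
    (hp : 1 ≤ p) (hp' : p < α / β) (hq : q = ((d : ℝ) + α) / β) :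
    ∃ C : ℝ, 0 < C ∧ ∀ f : EuclideanSpace ℝ (Fin d) → ℝ,
      besovNorm d α β f < ⊤ →
      pmNormHalf d α p q (fun sy => heatConv d α sy.1 f sy.2) ≤
        ENNReal.ofReal C * besovNorm d α β f := by
  have hp₀ : 0 < p := by linarith
  have hβp : β * p < α := by linarith [(lt_div_iff₀ hβ).mp hp']
  have hα : 0 < α := by nlinarith
  have hγ₁ : β * p / α < 1 := (div_lt_one hα).2 hβp
  set K := 2 ^ (1 - β * p / α) / (1 - β * p / α) *
    volume.real (Metric.ball (0 : EuclideanSpace ℝ (Fin d)) 1)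
  have hK : 0 < K := by
    have : 0 < 1 - β * p / α := by linarith
    have := ENNReal.toReal_pos (Metric.measure_ball_pos volume
      (0 : EuclideanSpace ℝ (Fin d)) one_pos).ne' measure_ball_lt_top.ne
    positivity
  refine ⟨K ^ (1 / p), by positivity, fun f _ ↦ ?_⟩
  refine iSup₂_le fun r hr ↦ iSup₂_le fun t ht ↦ iSup_le fun x ↦ ?_
  have hcyl := lintegral_parabolicCylinder_le volume hα (by positivity) hγ₁ hr ht x
    (g := fun sy ↦ ENNReal.ofReal (|heatConv d α sy.1 f sy.2| ^ p))
    (fun s hs ↦ ae_ofReal_abs_heatConv_rpow_le d α β hp₀.le f hs)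
  rw [ofReal_mul_rpow_mul_addHaar_ball volume x hr (by positivity), finrank_euclideanSpace_fin,
    ← Measure.volume_eq_prod] at hcyl
  calc _ ≤ ENNReal.ofReal (r ^ (-((d : ℝ) + α) * (1 / p - 1 / q))) *
        (ENNReal.ofReal (K * r ^ (d + α * (1 - β * p / α))) * besovNorm d α β f ^ p) ^ (1 / p) := by
        gcongr
        exact hcyl
    _ = ENNReal.ofReal (K ^ (1 / p)) * besovNorm d α β f :=
        ofReal_rpow_mul_rpow_one_div_eq hr hK.le hp₀ (by rw [hq]; field_simp; ring)

/-- If `f ∈ Ḃ^{-β,∞}_∞(ℝᵈ)` with `0 < β < d`, `1 ≤ p < α/β`, `q = (d+α)/β`, `p ≤ q`,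
then the heat extension `(t,x) ↦ p_t ∗ f(x)` belongs to `M^{p,q}_α([0,∞)×ℝᵈ)` and
`‖p_t ∗ f‖_{M^{p,q}_α} ≤ C ‖f‖_{Ḃ^{-β,∞}_∞}`. -/
theorem besov_subset_parabolicMorrey (d : ℕ) (α β p q : ℝ)
    (hα : 1 < α) (hα' : α < 2) (hβ : 0 < β) (hβd : β < d)
    (hp : 1 ≤ p) (hp' : p < α / β) (hq : q = ((d : ℝ) + α) / β) (hpq : p ≤ q) :
    ∃ C : ℝ, 0 < C ∧ ∀ f : EuclideanSpace ℝ (Fin d) → ℝ,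
      besovNorm d α β f < ⊤ →
      pmNormHalf d α p q (fun sy => heatConv d α sy.1 f sy.2) ≤
        ENNReal.ofReal C * besovNorm d α β f :=
  besov_subset_parabolicMorrey_general d α β p q hβ hp hp' hq
end

section
/- Let 1 < α < 2, 0 < β < (d+α)/p with 1 ≤ p < α/β, t > 0, x ∈ ℝ^d, and r > 0. Then ∬_{{|t−s|^{1/α}+|x−y|<r, s>0}} s^{−pβ/α} dy ds ≤ C r^{d+α−pβ}, with C independent of t, x, r. -/
/-!
The parabolic ball is contained in the cylinder `{|t - s| < r^α} × B(x, r)`, so with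
`γ = pβ/α ∈ [0, 1)` the integral is at most `|B(x, r)|` times the integral of `s^{-γ}` over
`(0, ∞) ∩ (t - r^α, t + r^α)`. If `t ≤ 2r^α` this window lies in `(0, 3r^α)`, where `s^{-γ}` is
integrable because `γ < 1`; otherwise `s > r^α` on it, so `s^{-γ} ≤ r^{-αγ}`. Either way the
time integral is `O(r^{α - pβ})`, and the ball contributes `r^d`.
-/

open MeasureTheory Set
open scoped ENNReal

lemma setLIntegral_Ioo_zero_rpow_neg {γ L : ℝ} (hγ : γ < 1) (hL : 0 < L) :
    ∫⁻ s in Ioo 0 L, ENNReal.ofReal (s ^ (-γ)) = ENNReal.ofReal (L ^ (1 - γ) / (1 - γ)) := by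
  have hint : IntegrableOn (fun s : ℝ ↦ s ^ (-γ)) (Ioc 0 L) :=
    (intervalIntegrable_iff_integrableOn_Ioc_of_le hL.le).mp
      (intervalIntegral.intervalIntegrable_rpow' (by linarith))
  rw [← ofReal_integral_eq_lintegral_ofReal (hint.mono_set Ioo_subset_Ioc_self)
    ((ae_restrict_mem measurableSet_Ioo).mono fun s hs ↦ Real.rpow_nonneg hs.1.le _),
    integral_Ioc_eq_integral_Ioo.symm, ← intervalIntegral.integral_of_le hL.le,
    integral_rpow (Or.inl (by linarith)), Real.zero_rpow (by linarith)]
  ring_nf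

lemma setLIntegral_rpow_neg_inter_Ioo_le_of_le_two_mul {γ T t : ℝ} (hγ₀ : 0 ≤ γ) (hγ : γ < 1)
    (hT : 0 < T) (ht : t ≤ 2 * T) :
    ∫⁻ s in Ioi 0 ∩ Ioo (t - T) (t + T), ENNReal.ofReal (s ^ (-γ)) ≤
      ENNReal.ofReal (3 / (1 - γ) * T ^ (1 - γ)) := by
  have hsub : Ioi 0 ∩ Ioo (t - T) (t + T) ⊆ Ioo 0 (3 * T) :=
    fun s ⟨hs₀, hs⟩ ↦ ⟨hs₀, by linarith [hs.2]⟩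
  have hpow : (3 * T) ^ (1 - γ) ≤ 3 * T ^ (1 - γ) := by
    rw [Real.mul_rpow (by norm_num) hT.le]
    gcongr
    exact Real.rpow_le_self_of_one_le (by norm_num) (by linarith)
  calc _ ≤ ∫⁻ s in Ioo 0 (3 * T), ENNReal.ofReal (s ^ (-γ)) := lintegral_mono_set hsub
    _ = ENNReal.ofReal ((3 * T) ^ (1 - γ) / (1 - γ)) :=
        setLIntegral_Ioo_zero_rpow_neg hγ (by linarith)
    _ ≤ _ := by
      gcongr ENNReal.ofReal ?_
      rw [div_mul_eq_mul_div]
      gcongr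

lemma setLIntegral_rpow_neg_inter_Ioo_le_of_two_mul_lt {γ T t : ℝ} (hγ₀ : 0 ≤ γ) (hγ : γ < 1)
    (hT : 0 < T) (ht : 2 * T < t) :
    ∫⁻ s in Ioi 0 ∩ Ioo (t - T) (t + T), ENNReal.ofReal (s ^ (-γ)) ≤
      ENNReal.ofReal (3 / (1 - γ) * T ^ (1 - γ)) := by
  have hbound : ∀ s ∈ Ioi 0 ∩ Ioo (t - T) (t + T), ENNReal.ofReal (s ^ (-γ)) ≤
      ENNReal.ofReal (T ^ (-γ)) := fun s ⟨_, hs⟩ ↦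
    ENNReal.ofReal_le_ofReal (Real.rpow_le_rpow_of_nonpos hT (by linarith [hs.1]) (by linarith))
  have hconst : T ^ (-γ) * (2 * T) ≤ 3 / (1 - γ) * T ^ (1 - γ) := by
    have hpow : T ^ (-γ) * (2 * T) = 2 * T ^ (1 - γ) := by
      rw [show 1 - γ = -γ + 1 by ring, Real.rpow_add hT, Real.rpow_one]; ring
    rw [hpow]
    gcongr
    rw [le_div_iff₀ (by linarith)]
    linarith
  calc _ ≤ ∫⁻ _ in Ioi 0 ∩ Ioo (t - T) (t + T), ENNReal.ofReal (T ^ (-γ)) :=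
        setLIntegral_mono measurable_const hbound
    _ ≤ ENNReal.ofReal (T ^ (-γ)) * volume (Ioo (t - T) (t + T)) := by
        rw [setLIntegral_const]; gcongr; exact inter_subset_right
    _ = ENNReal.ofReal (T ^ (-γ) * (2 * T)) := by
        rw [Real.volume_Ioo, ENNReal.ofReal_mul (Real.rpow_nonneg hT.le _)]
        congr 2
        ring
    _ ≤ _ := ENNReal.ofReal_le_ofReal hconst

lemma setLIntegral_rpow_neg_inter_Ioo_le {γ : ℝ} (hγ₀ : 0 ≤ γ) (hγ : γ < 1) {T : ℝ} (hT : 0 < T)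
    (t : ℝ) :
    ∫⁻ s in Ioi 0 ∩ Ioo (t - T) (t + T), ENNReal.ofReal (s ^ (-γ)) ≤
      ENNReal.ofReal (3 / (1 - γ) * T ^ (1 - γ)) := by
  rcases le_or_gt t (2 * T) with ht | ht
  · exact setLIntegral_rpow_neg_inter_Ioo_le_of_le_two_mul hγ₀ hγ hT ht
  · exact setLIntegral_rpow_neg_inter_Ioo_le_of_two_mul_lt hγ₀ hγ hT ht

lemma setOf_parabolic_subset_prod {E : Type*} [PseudoMetricSpace E] {α : ℝ} (hα : 0 < α)
    (t : ℝ) (x : E) (r : ℝ) :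
    {sy : ℝ × E | 0 < sy.1 ∧ |t - sy.1| ^ (1 / α) + dist x sy.2 < r} ⊆
      (Ioi 0 ∩ Ioo (t - r ^ α) (t + r ^ α)) ×ˢ Metric.ball x r := by
  rintro ⟨s, y⟩ ⟨hs, hlt : |t - s| ^ (1 / α) + dist x y < r⟩
  have htime : |t - s| ^ (1 / α) < r := by linarith [dist_nonneg (x := x) (y := y)]
  have hspace : dist y x < r := by
    linarith [dist_comm x y, Real.rpow_nonneg (abs_nonneg (t - s)) (1 / α)]
  have hT : |t - s| < r ^ α := by
    simpa [← Real.rpow_mul (abs_nonneg _), hα.ne'] using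
      Real.rpow_lt_rpow (Real.rpow_nonneg (abs_nonneg _) _) htime hα
  obtain ⟨h₁, h₂⟩ := abs_lt.mp hT
  exact ⟨⟨hs, by linarith, by linarith⟩, hspace⟩

lemma setLIntegral_prod_fst {α β : Type*} [MeasurableSpace α] [MeasurableSpace β]
    {μ : Measure α} {ν : Measure β} [SFinite μ] [SFinite ν] {f : α → ℝ≥0∞} (hf : Measurable f)
    (s : Set α) (t : Set β) :
    ∫⁻ z in s ×ˢ t, f z.1 ∂μ.prod ν = (∫⁻ x in s, f x ∂μ) * ν t := by
  rw [setLIntegral_prod (fun z ↦ f z.1) (hf.comp measurable_fst).aemeasurable]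
  simp only [setLIntegral_const]
  exact lintegral_mul_const _ hf

lemma addHaar_ball_eq_ofReal_mul_rpow {E : Type*} [NormedAddCommGroup E] [NormedSpace ℝ E]
    [MeasurableSpace E] [BorelSpace E] [FiniteDimensional ℝ E] (μ : Measure E)
    [μ.IsAddHaarMeasure] (x : E) {r : ℝ} (hr : 0 < r) :
    μ (Metric.ball x r) =
      ENNReal.ofReal ((μ (Metric.ball 0 1)).toReal * r ^ (Module.finrank ℝ E : ℝ)) := by
  rw [Measure.addHaar_ball_of_pos μ x hr, ENNReal.ofReal_mul ENNReal.toReal_nonneg,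
    ENNReal.ofReal_toReal measure_ball_lt_top.ne, Real.rpow_natCast, mul_comm]

theorem parabolic_weight_integral_bound_general (d : ℕ) (α β p : ℝ)
    (hβ : 0 < β) (hp : 1 ≤ p) (hp' : p < α / β) :
    ∃ C : ℝ, 0 < C ∧ ∀ (t : ℝ), 0 < t → ∀ (x : EuclideanSpace ℝ (Fin d)) (r : ℝ),
      0 < r →
      (∫⁻ sy in {sy : ℝ × EuclideanSpace ℝ (Fin d) |
          0 < sy.1 ∧ |t - sy.1| ^ (1 / α) + dist x sy.2 < r},
        ENNReal.ofReal (sy.1 ^ (-(p * β / α)))) ≤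
        ENNReal.ofReal (C * r ^ ((d : ℝ) + α - p * β)) := by
  have hpβ : p * β < α := (lt_div_iff₀ hβ).mp hp'
  have hα : 0 < α := (mul_pos (by linarith) hβ).trans hpβ
  set γ := p * β / α
  have hγ₀ : 0 ≤ γ := by positivity
  have hγ : γ < 1 := (div_lt_one hα).mpr hpβ
  set c := (volume (Metric.ball (0 : EuclideanSpace ℝ (Fin d)) 1)).toReal
  have h1γ : 0 < 1 - γ := by linarith
  have hc : 0 < c := ENNReal.toReal_pos (Metric.measure_ball_pos volume _ one_pos).ne'
    measure_ball_lt_top.ne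
  refine ⟨3 / (1 - γ) * c, by positivity, fun t _ x r hr ↦ ?_⟩
  have hexp : (r ^ α) ^ (1 - γ) * r ^ (d : ℝ) = r ^ ((d : ℝ) + α - p * β) := by
    rw [← Real.rpow_mul hr.le, ← Real.rpow_add hr]
    congr 1
    have : α * γ = p * β := mul_div_cancel₀ _ hα.ne'
    linear_combination -this
  calc _ ≤ ∫⁻ sy in (Ioi 0 ∩ Ioo (t - r ^ α) (t + r ^ α)) ×ˢ Metric.ball x r,
          ENNReal.ofReal (sy.1 ^ (-γ)) :=
        lintegral_mono_set (setOf_parabolic_subset_prod hα t x r)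
    _ = (∫⁻ s in Ioi 0 ∩ Ioo (t - r ^ α) (t + r ^ α), ENNReal.ofReal (s ^ (-γ))) *
          volume (Metric.ball x r) :=
        setLIntegral_prod_fst (measurable_id.pow_const _).ennreal_ofReal _ _
    _ ≤ ENNReal.ofReal (3 / (1 - γ) * (r ^ α) ^ (1 - γ)) *
          ENNReal.ofReal (c * r ^ (d : ℝ)) := by
        rw [addHaar_ball_eq_ofReal_mul_rpow volume x hr, finrank_euclideanSpace_fin]
        gcongr
        exact setLIntegral_rpow_neg_inter_Ioo_le hγ₀ hγ (Real.rpow_pos_of_pos hr α) t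
    _ = _ := by
        rw [← ENNReal.ofReal_mul (by positivity), ← hexp]
        congr 1
        ring

/-- Key integral estimate: for `1 < α < 2`, `0 < β < (d+α)/p`, `1 ≤ p < α/β`,
`∬_{{|t-s|^{1/α}+|x-y|<r, s>0}} s^{-pβ/α} dy ds ≤ C r^{d+α-pβ}`, uniformly in
`t > 0`, `x` and `r > 0`. -/
theorem parabolic_weight_integral_bound (d : ℕ) (α β p : ℝ)
    (hα : 1 < α) (hα' : α < 2) (hβ : 0 < β) (hβ' : β < ((d : ℝ) + α) / p)
    (hp : 1 ≤ p) (hp' : p < α / β) :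
    ∃ C : ℝ, 0 < C ∧ ∀ (t : ℝ), 0 < t → ∀ (x : EuclideanSpace ℝ (Fin d)) (r : ℝ),
      0 < r →
      (∫⁻ sy in {sy : ℝ × EuclideanSpace ℝ (Fin d) |
          0 < sy.1 ∧ |t - sy.1| ^ (1 / α) + dist x sy.2 < r},
        ENNReal.ofReal (sy.1 ^ (-(p * β / α)))) ≤
        ENNReal.ofReal (C * r ^ ((d : ℝ) + α - p * β)) :=
  parabolic_weight_integral_bound_general d α β p hβ hp hp'
end
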